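/- arXiv:1807.07809 — 4 statements merged into one kernel-verified Lean document; each statement's English description precedes it below -/
import Mathlib

section
/- Let G be a connected graph with adjacency matrix A and Perron eigenvector ν, and let P be a partition of V with normalized weight-characteristic matrix S̄* (the n×m matrix with entries ν_u/‖ρV_j‖ if u ∈ V_j and 0 otherwise, where ‖ρV_j‖² = Σ_{u∈V_j} ν_u²). Then P is weight-regular if and only if A commutes with S̄* S̄*ᵀ. -/
open Finset Matrix

noncomputable def bstar {V : Type*} [Fintype V] [DecidableEq V] {ι : Type*} [DecidableEq ι]
    (G : SimpleGraph V) [DecidableRel G.Adj] (ν : V → ℝ) (c : V → ι) (u : V) (j : ι) : ℝ :=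
  (ν u)⁻¹ * ∑ v ∈ (G.neighborFinset u).filter (fun v => c v = j), ν v

def WeightRegular {V : Type*} [Fintype V] [DecidableEq V] {ι : Type*} [DecidableEq ι]
    (G : SimpleGraph V) [DecidableRel G.Adj] (ν : V → ℝ) (c : V → ι) : Prop :=
  ∀ (j : ι) (u v : V), c u = c v → bstar G ν c u j = bstar G ν c v j

/-- The normalized weight-characteristic matrix `S̄*` of the partition given by `c`:
entry `(u, j)` is `ν_u / ‖ρV_j‖` if `u ∈ V_j` and `0` otherwise, where
`‖ρV_j‖² = Σ_{v ∈ V_j} ν_v²`. -/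
noncomputable def Sbar {V : Type*} [Fintype V] [DecidableEq V] {m : ℕ}
    (ν : V → ℝ) (c : V → Fin m) : Matrix V (Fin m) ℝ :=
  Matrix.of fun u j =>
    if c u = j then ν u / Real.sqrt (∑ v ∈ univ.filter (fun v => c v = j), ν v ^ 2) else 0

/-- a partition is weight-regular iff the adjacency matrix commutes
with `S̄* S̄*ᵀ`. -/
theorem weightRegular_iff_commute
    {V : Type*} [Fintype V] [DecidableEq V]
    (G : SimpleGraph V) [DecidableRel G.Adj]
    (hconn : G.Connected)
    (lam : ℝ) (ν : V → ℝ)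
    (hpos : ∀ u, 0 < ν u)
    (heig : (G.adjMatrix ℝ).mulVec ν = lam • ν)
    {m : ℕ} (c : V → Fin m) (hc : Function.Surjective c) :
    WeightRegular G ν c ↔
      G.adjMatrix ℝ * (Sbar ν c * (Sbar ν c)ᵀ) = (Sbar ν c * (Sbar ν c)ᵀ) * G.adjMatrix ℝ := by
  classical
  have hν : ∀ u, ν u ≠ 0 := fun u => (hpos u).ne'
  set N : Fin m → ℝ := fun j => ∑ v ∈ univ.filter (fun v => c v = j), ν v ^ 2 with hNdef
  have hN : ∀ j, 0 < N j := by
    intro j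
    obtain ⟨v, hv⟩ := hc j
    exact Finset.sum_pos' (fun i _ => sq_nonneg _) ⟨v, by simp [hv], pow_pos (hpos v) 2⟩
  have hsq : ∀ j, Real.sqrt (N j) * Real.sqrt (N j) = N j :=
    fun j => Real.mul_self_sqrt (hN j).le
  -- entries of B = Sbar * Sbarᵀ
  have hB : ∀ u w, (Sbar ν c * (Sbar ν c)ᵀ) u w
      = if c u = c w then ν u * ν w / N (c u) else 0 := by
    intro u w
    have hSdef : ∀ (x : V) (j : Fin m),
        Sbar ν c x j = if c x = j then ν x / Real.sqrt (N j) else 0 := fun x j => rfl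
    rw [Matrix.mul_apply, Finset.sum_eq_single (c u)]
    · rw [transpose_apply, hSdef, hSdef, if_pos rfl]
      by_cases h2 : c w = c u
      · rw [if_pos h2, div_mul_div_comm, hsq, if_pos h2.symm]
      · rw [if_neg h2, mul_zero, if_neg (fun h => h2 h.symm)]
    · intro j _ hj
      rw [hSdef, if_neg (fun h => hj h.symm), zero_mul]
    · intro h
      exact absurd (Finset.mem_univ _) h
  have hbst : ∀ (p : V) (j : Fin m),
      ∑ q ∈ (G.neighborFinset p).filter (fun q => c q = j), ν q
        = ν p * bstar G ν c p j := by
    intro p j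
    rw [bstar, ← mul_assoc, mul_inv_cancel₀ (hν p), one_mul]
  have hAB : ∀ u w, (G.adjMatrix ℝ * (Sbar ν c * (Sbar ν c)ᵀ)) u w
      = ν u * bstar G ν c u (c w) * ν w / N (c w) := by
    intro u w
    rw [SimpleGraph.adjMatrix_mul_apply]
    have h1 : ∀ v ∈ G.neighborFinset u, (Sbar ν c * (Sbar ν c)ᵀ) v w
        = if c v = c w then ν v * ν w / N (c w) else 0 := by
      intro v _
      rw [hB]
      split_ifs with h
      · rw [h]
      · rfl
    rw [Finset.sum_congr rfl h1, ← Finset.sum_filter, ← hbst u (c w), ← Finset.sum_div,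
      ← Finset.sum_mul]
  have hBA : ∀ u w, ((Sbar ν c * (Sbar ν c)ᵀ) * G.adjMatrix ℝ) u w
      = ν w * bstar G ν c w (c u) * ν u / N (c u) := by
    intro u w
    rw [SimpleGraph.mul_adjMatrix_apply]
    have h1 : ∀ v ∈ G.neighborFinset w, (Sbar ν c * (Sbar ν c)ᵀ) u v
        = if c v = c u then ν u * ν v / N (c u) else 0 := by
      intro v _
      rw [hB]
      by_cases h : c u = c v
      · rw [if_pos h, if_pos h.symm]
      · rw [if_neg h, if_neg (fun h' => h h'.symm)]
    rw [Finset.sum_congr rfl h1, ← Finset.sum_filter, ← Finset.sum_div, ← Finset.mul_sum,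
      hbst w (c u)]
    ring
  have hfil : ∀ (p : V) (j : Fin m), (G.neighborFinset p).filter (fun q => c q = j)
      = univ.filter (fun q => c q = j ∧ G.Adj p q) := by
    intro p j
    ext q
    simp [SimpleGraph.mem_neighborFinset, and_comm]
  -- symmetry of the interaction sums
  have expand : ∀ i j : Fin m,
      (∑ p ∈ univ.filter (fun p => c p = i),
        ν p * ∑ q ∈ (G.neighborFinset p).filter (fun q => c q = j), ν q)
      = ∑ p : V, ∑ q : V, if c p = i ∧ c q = j ∧ G.Adj p q then ν p * ν q else 0 := by
    intro i j
    rw [Finset.sum_filter]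
    refine Finset.sum_congr rfl fun p _ => ?_
    by_cases h : c p = i
    · rw [if_pos h, hfil, Finset.sum_filter, Finset.mul_sum]
      refine Finset.sum_congr rfl fun q _ => ?_
      simp [h, mul_ite]
    · simp [h]
  have key : ∀ i j : Fin m,
      (∑ p ∈ univ.filter (fun p => c p = i),
        ν p * ∑ q ∈ (G.neighborFinset p).filter (fun q => c q = j), ν q)
      = (∑ q ∈ univ.filter (fun q => c q = j),
        ν q * ∑ p ∈ (G.neighborFinset q).filter (fun p => c p = i), ν p) := by
    intro i j
    rw [expand i j, expand j i, Finset.sum_comm]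
    refine Finset.sum_congr rfl fun q _ => Finset.sum_congr rfl fun p _ => ?_
    have hiff : (c p = i ∧ c q = j ∧ G.Adj p q) ↔ (c q = j ∧ c p = i ∧ G.Adj q p) := by
      rw [G.adj_comm]; tauto
    rw [if_congr hiff (mul_comm _ _) rfl]
  constructor
  · -- weight-regular → commute
    intro hw
    have hside : ∀ (u0 : V) (j : Fin m),
        (∑ p ∈ univ.filter (fun p => c p = c u0),
          ν p * ∑ q ∈ (G.neighborFinset p).filter (fun q => c q = j), ν q)
        = N (c u0) * bstar G ν c u0 j := by
      intro u0 j
      rw [show N (c u0) = ∑ p ∈ univ.filter (fun p => c p = c u0), ν p ^ 2 from rfl,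
        Finset.sum_mul]
      refine Finset.sum_congr rfl fun p hp => ?_
      have hcp : c p = c u0 := (Finset.mem_filter.1 hp).2
      rw [hbst p j, hw j p u0 hcp]
      ring
    ext u w
    rw [hAB, hBA]
    have hk := key (c u) (c w)
    rw [hside u (c w), hside w (c u)] at hk
    have hu := (hN (c u)).ne'
    have hwn := (hN (c w)).ne'
    field_simp
    linear_combination ν u * ν w * hk
  · -- commute → weight-regular
    intro h j u v huv
    obtain ⟨w, hwj⟩ := hc j
    have e : ∀ x : V, c x = c u →
        bstar G ν c x (c w) / N (c w) = bstar G ν c w (c x) / N (c x) := by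
      intro x hx
      have h1 := Matrix.ext_iff.mpr h x w
      rw [hAB, hBA] at h1
      have h2 : (ν x * ν w) * (bstar G ν c x (c w) / N (c w))
          = (ν x * ν w) * (bstar G ν c w (c x) / N (c x)) := by
        linear_combination h1
      exact mul_left_cancel₀ (mul_ne_zero (hν x) (hν w)) h2
    have e1 := e u rfl
    have e2 := e v huv.symm
    rw [huv] at e1
    have : bstar G ν c u (c w) / N (c w) = bstar G ν c v (c w) / N (c w) := by
      rw [e1, e2]
    rw [← hwj]
    field_simp [(hN (c w)).ne'] at this
    exact this
end

section
/- Let G be a connected graph with adjacency matrix A. G is regular if and only if there exists a polynomial H with real coefficients such that H(A) = J, the all-ones matrix. -/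
open Finset Polynomial Matrix

/-- An eigenvector of the adjacency matrix of a connected `k`-regular graph for the
eigenvalue `k` is constant. -/
lemma hoffman_eigenvector_const
    {V : Type*} [Fintype V] [DecidableEq V]
    (G : SimpleGraph V) [DecidableRel G.Adj]
    (hconn : G.Connected) {k : ℕ} (hreg : G.IsRegularOfDegree k)
    (v : V → ℝ) (hv : G.adjMatrix ℝ *ᵥ v = (k : ℝ) • v) :
    ∀ i j : V, v i = v j := by
  have : Nonempty V := hconn.nonempty
  obtain ⟨i0, -, hi0⟩ := Finset.exists_max_image Finset.univ v ⟨Classical.arbitrary V,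
    Finset.mem_univ _⟩
  have hmax : ∀ i, v i ≤ v i0 := fun i => hi0 i (Finset.mem_univ i)
  -- one step: a neighbor of a max vertex attains the max
  have step : ∀ a b : V, G.Adj a b → v a = v i0 → v b = v i0 := by
    intro a b hab ha
    have hsum : ∑ u ∈ G.neighborFinset a, v u = ∑ u ∈ G.neighborFinset a, v i0 := by
      have h1 : ∑ u ∈ G.neighborFinset a, v u = (k : ℝ) * v a := by
        have := congrFun hv a
        simpa [SimpleGraph.adjMatrix_mulVec_apply] using this
      have h2 : ∑ u ∈ G.neighborFinset a, v i0 = (k : ℝ) * v i0 := by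
        simp [hreg a, mul_comm]
      rw [h1, h2, ha]
    have := (Finset.sum_eq_sum_iff_of_le (fun i _ => hmax i)).1 hsum
    exact this b (by simpa [SimpleGraph.mem_neighborFinset] using hab)
  have key : ∀ a b : V, v a = v i0 → G.Walk a b → v b = v i0 := by
    intro a b ha w
    induction w with
    | nil => exact ha
    | cons h p ih => exact ih (step _ _ h ha)
  intro i j
  have hi : v i = v i0 := key i0 i rfl (hconn i0 i).some
  have hj : v j = v i0 := key i0 j rfl (hconn i0 j).some
  rw [hi, hj]

/-- Evaluating a polynomial at a symmetric matrix yields a symmetric matrix. -/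
lemma hoffman_aeval_transpose
    {V : Type*} [Fintype V] [DecidableEq V]
    (A : Matrix V V ℝ) (hA : Aᵀ = A) (p : Polynomial ℝ) :
    (Polynomial.aeval A p)ᵀ = Polynomial.aeval A p := by
  induction p using Polynomial.induction_on' with
  | add p q hp hq => simp [map_add, Matrix.transpose_add, hp, hq]
  | monomial n a =>
      simp only [Polynomial.aeval_monomial, Matrix.transpose_mul, Matrix.transpose_pow, hA,
        Algebra.algebraMap_eq_smul_one, Matrix.transpose_smul, Matrix.transpose_one]
      rw [Matrix.smul_mul, Matrix.mul_smul, one_mul, mul_one]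

/-- Powers of the adjacency matrix act on the constant vector. -/
lemma hoffman_aeval_mulVec
    {V : Type*} [Fintype V] [DecidableEq V]
    (A : Matrix V V ℝ) (k : ℝ) (hA : A *ᵥ (fun _ => (1 : ℝ)) = k • fun _ => (1 : ℝ))
    (p : Polynomial ℝ) :
    (Polynomial.aeval A p) *ᵥ (fun _ => (1 : ℝ)) = p.eval k • fun _ => (1 : ℝ) := by
  induction p using Polynomial.induction_on' with
  | add p q hp hq => simp [map_add, Matrix.add_mulVec, hp, hq, add_smul]
  | monomial n a =>
      have hpow : ∀ m : ℕ, (A ^ m) *ᵥ (fun _ => (1 : ℝ)) = k ^ m • fun _ => (1 : ℝ) := by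
        intro m
        induction m with
        | zero => simp [Matrix.one_mulVec]
        | succ m ih =>
            rw [pow_succ, pow_succ, ← Matrix.mulVec_mulVec, hA, Matrix.mulVec_smul, ih,
              smul_smul, mul_comm]
      simp only [Polynomial.aeval_monomial, Polynomial.eval_monomial]
      rw [← Algebra.smul_def, Matrix.smul_mulVec, hpow, smul_smul]

/-- Hoffman: a connected graph `G` is regular if and only if there is
a real polynomial `H` with `H(A) = J`, the all-ones matrix. -/
theorem hoffman_regular_iff_poly
    {V : Type*} [Fintype V] [DecidableEq V]
    (G : SimpleGraph V) [DecidableRel G.Adj]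
    (hconn : G.Connected) :
    (∃ k : ℕ, G.IsRegularOfDegree k) ↔
      ∃ H : Polynomial ℝ,
        Polynomial.aeval (G.adjMatrix ℝ) H = Matrix.of fun _ _ : V => (1 : ℝ) := by
  have : Nonempty V := hconn.nonempty
  set A : Matrix V V ℝ := G.adjMatrix ℝ with hAdef
  constructor
  · rintro ⟨k, hreg⟩
    -- the all-ones vector is an eigenvector for eigenvalue k
    have heig : A *ᵥ (fun _ => (1 : ℝ)) = (k : ℝ) • fun _ => (1 : ℝ) := by
      funext i
      show (A *ᵥ Function.const V (1 : ℝ)) i = (k : ℝ) * 1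
      rw [hAdef, SimpleGraph.adjMatrix_mulVec_const_apply, hreg i]
    have hint : IsIntegral ℝ A := Algebra.IsIntegral.isIntegral A
    set m : Polynomial ℝ := minpoly ℝ A with hmdef
    have hm0 : m ≠ 0 := minpoly.ne_zero hint
    have hmA : Polynomial.aeval A m = 0 := minpoly.aeval ℝ A
    -- k is a root of m
    have hroot : m.IsRoot (k : ℝ) := by
      have h1 : (Polynomial.aeval A m) *ᵥ (fun _ => (1 : ℝ)) =
          m.eval (k : ℝ) • fun _ => (1 : ℝ) := hoffman_aeval_mulVec A _ heig m
      rw [hmA] at h1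
      have := congrFun h1.symm (Classical.arbitrary V)
      simpa [Matrix.zero_mulVec] using this
    obtain ⟨q, hq⟩ := (Polynomial.dvd_iff_isRoot).2 hroot
    set B : Matrix V V ℝ := Polynomial.aeval A q with hBdef
    have hB0 : B ≠ 0 := by
      intro h
      have hq0 : q ≠ 0 := fun h0 => hm0 (by rw [hq, h0, mul_zero])
      have hle := minpoly.degree_le_of_ne_zero ℝ A hq0 h
      rw [← hmdef] at hle
      have hnat : m.natDegree ≤ q.natDegree := Polynomial.natDegree_le_natDegree hle
      have hm1 : m.natDegree = 1 + q.natDegree := by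
        rw [hq, Polynomial.natDegree_mul (Polynomial.X_sub_C_ne_zero _) hq0,
          Polynomial.natDegree_X_sub_C]
      omega
    -- A * B = k • B
    have hAB : A * B = (k : ℝ) • B := by
      have h1 : Polynomial.aeval A ((X - C (k : ℝ)) * q) = 0 := by rw [← hq]; exact hmA
      have h3 : Polynomial.aeval A (X - C (k : ℝ)) = A - (k : ℝ) • 1 := by
        rw [map_sub, Polynomial.aeval_X, Polynomial.aeval_C, Algebra.algebraMap_eq_smul_one]
      have h2 : (A - (k : ℝ) • 1) * B = 0 := by
        rw [← h3, ← _root_.map_mul, h1]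
      have h4 : A * B - (k : ℝ) • B = 0 := by
        rw [← h2, Matrix.sub_mul, Matrix.smul_mul, one_mul]
      exact sub_eq_zero.1 h4
    -- each column of B is an eigenvector, hence constant
    have hcol : ∀ i i' j : V, B i j = B i' j := by
      intro i i' j
      have hv : A *ᵥ (fun l => B l j) = (k : ℝ) • fun l => B l j := by
        funext l
        have h1 : (A *ᵥ fun l => B l j) l = (A * B) l j := by
          simp [Matrix.mul_apply, Matrix.mulVec, dotProduct]
        rw [h1, hAB]
        simp
      exact hoffman_eigenvector_const G hconn hreg _ hv i i'
    -- B is symmetric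
    have hBsymm : ∀ i j : V, B i j = B j i := by
      intro i j
      have := hoffman_aeval_transpose A (G.transpose_adjMatrix (α := ℝ)) q
      rw [← hBdef] at this
      exact (congrFun (congrFun this i) j).symm
    obtain ⟨i0⟩ := ‹Nonempty V›
    set t : ℝ := B i0 i0 with htdef
    have hBt : ∀ i j : V, B i j = t := by
      intro i j
      calc B i j = B i0 j := hcol i i0 j
        _ = B j i0 := hBsymm i0 j
        _ = B i0 i0 := hcol j i0 i0
    have ht0 : t ≠ 0 := by
      intro h
      apply hB0
      ext i j
      rw [hBt i j, h]; rfl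
    refine ⟨C t⁻¹ * q, ?_⟩
    rw [_root_.map_mul, Polynomial.aeval_C, ← hBdef,
      Algebra.algebraMap_eq_smul_one, Matrix.smul_mul, one_mul]
    ext i j
    rw [Matrix.smul_apply, hBt i j, Matrix.of_apply, smul_eq_mul, inv_mul_cancel₀ ht0]
  · rintro ⟨H, hH⟩
    set J : Matrix V V ℝ := Matrix.of fun _ _ : V => (1 : ℝ) with hJdef
    have hcomm : A * J = J * A := by
      rw [← hH]
      have h1 : A * (Polynomial.aeval A) H = (Polynomial.aeval A) (X * H) := by
        rw [_root_.map_mul, Polynomial.aeval_X]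
      have h2 : (Polynomial.aeval A) (H * X) = (Polynomial.aeval A) H * A := by
        rw [_root_.map_mul, Polynomial.aeval_X]
      rw [h1, mul_comm X H, h2]
    obtain ⟨i0⟩ := ‹Nonempty V›
    refine ⟨G.degree i0, fun v => ?_⟩
    have h1 : (A * J) v i0 = (G.degree v : ℝ) := by
      rw [hAdef, SimpleGraph.adjMatrix_mul_apply]
      have hJ1 : ∀ u, J u i0 = 1 := fun u => rfl
      rw [Finset.sum_congr rfl (fun u _ => hJ1 u), Finset.sum_const,
        SimpleGraph.card_neighborFinset_eq_degree]
      simp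
    have h2 : (J * A) v i0 = (G.degree i0 : ℝ) := by
      rw [hAdef, SimpleGraph.mul_adjMatrix_apply]
      have hJ1 : ∀ u, J v u = 1 := fun u => rfl
      rw [Finset.sum_congr rfl (fun u _ => hJ1 u), Finset.sum_const,
        SimpleGraph.card_neighborFinset_eq_degree]
      simp
    have : (G.degree v : ℝ) = (G.degree i0 : ℝ) := by rw [← h1, ← h2, hcomm]
    exact_mod_cast this
end

section
/- Let G be a graph with at least one edge, adjacency matrix eigenvalues λ₁ ≥ … ≥ λ_n, and chromatic number χ(G). Then χ(G) ≥ 1 − λ₁/λ_n. -/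
/-!
A proper colouring `C` with `k` colours gives the positive semidefinite matrix
`P p q = k [C p = C q] - 1` (a multiple of the Gram matrix of the vertices of a centred regular
simplex, placed at the colour of each vertex). If `λ_n` is the least eigenvalue of the adjacency matrix `A`, then
`A - λ_n I` is positive semidefinite too, hence so is its Hadamard product with `P` (Schur). Since
`P` is `-1` on every edge and `k - 1` on the diagonal, that product is `λ_n (1 - k) I - A`, so
every eigenvalue of `A` is at most `λ_n (1 - k)`; an edge forces `λ_n ≤ -1 < 0`.
-/

open Matrix

namespace Matrix

variable {n : Type*} [Fintype n] [DecidableEq n] {A : Matrix n n ℝ}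

lemma IsHermitian.posSemidef_sub_smul_one_iff (hA : A.IsHermitian) (c : ℝ) :
    (A - c • 1).PosSemidef ↔ ∀ i, c ≤ hA.eigenvalues i := by
  rw [posSemidef_iff_isHermitian_and_spectrum_nonneg,
    and_iff_right (hA.sub (isHermitian_one.smul (.all c))), ← Algebra.algebraMap_eq_smul_one,
    ← spectrum.sub_singleton_eq, hA.spectrum_real_eq_range_eigenvalues]
  simp [Set.subset_def]

lemma IsHermitian.posSemidef_smul_one_sub_iff (hA : A.IsHermitian) (c : ℝ) :
    (c • 1 - A).PosSemidef ↔ ∀ i, hA.eigenvalues i ≤ c := by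
  rw [posSemidef_iff_isHermitian_and_spectrum_nonneg,
    and_iff_right ((isHermitian_one.smul (.all c)).sub hA), ← Algebra.algebraMap_eq_smul_one,
    ← spectrum.singleton_sub_eq, hA.spectrum_real_eq_range_eigenvalues]
  simp [Set.subset_def]

end Matrix

section SimplexGram

variable {V α : Type*} [Fintype α] [DecidableEq α]

lemma single_card_sub_one_dotProduct (a b : α) :
    (Pi.single a (Fintype.card α : ℝ) - 1) ⬝ᵥ (Pi.single b (Fintype.card α : ℝ) - 1)
      = Fintype.card α * (if a = b then (Fintype.card α : ℝ) - 1 else -1) := by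
  split_ifs with h
  · subst h; simp [sub_dotProduct, dotProduct_sub, mul_comm]
  · simp [sub_dotProduct, dotProduct_sub, Ne.symm h]

def simplexGram (f : V → α) : Matrix V V ℝ :=
  of fun p q => if f p = f q then (Fintype.card α : ℝ) - 1 else -1

lemma posSemidef_simplexGram [Fintype V] (f : V → α) : (simplexGram f).PosSemidef := by
  let M : Matrix V α ℝ := of fun p => Pi.single (f p) (Fintype.card α : ℝ) - 1
  suffices (Fintype.card α : ℝ)⁻¹ • (M * Mᴴ) = simplexGram f from
    this ▸ (posSemidef_self_mul_conjTranspose M).smul (by positivity)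
  ext p q
  have hk : (Fintype.card α : ℝ) ≠ 0 := Nat.cast_ne_zero.2 (Fintype.card_pos_iff.2 ⟨f p⟩).ne'
  have hMM : (M * Mᴴ) p q =
      (Pi.single (f p) (Fintype.card α : ℝ) - 1) ⬝ᵥ (Pi.single (f q) (Fintype.card α : ℝ) - 1) :=
    rfl
  rw [Matrix.smul_apply, hMM, single_card_sub_one_dotProduct, smul_eq_mul,
    inv_mul_cancel_left₀ hk]
  rfl

end SimplexGram

namespace SimpleGraph

variable {V α : Type*} [DecidableEq V] {G : SimpleGraph V} [DecidableRel G.Adj]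

lemma Adj.le_neg_one_of_posSemidef [Fintype V] {u v : V} (huv : G.Adj u v) {c : ℝ}
    (hc : (G.adjMatrix ℝ - c • 1).PosSemidef) : c ≤ -1 := by
  let y : V → ℝ := Pi.single u 1 - Pi.single v 1
  have hy : star y ⬝ᵥ (G.adjMatrix ℝ - c • 1) *ᵥ y = -2 * (1 + c) := by
    simp [y, mulVec_sub, dotProduct_sub, sub_dotProduct, huv, huv.symm, huv.ne, huv.ne.symm]
    ring
  linarith [hc.dotProduct_mulVec_nonneg y]

variable [Fintype α] [DecidableEq α]

lemma Coloring.sub_smul_one_hadamard_simplexGram (C : G.Coloring α) (c : ℝ) :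
    (G.adjMatrix ℝ - c • 1) ⊙ simplexGram C = (c * (1 - Fintype.card α)) • 1 - G.adjMatrix ℝ := by
  ext p q
  by_cases hpq : p = q
  · subst hpq; simp [simplexGram, mul_sub, neg_add_eq_sub]
  · by_cases hadj : G.Adj p q
    · simp [simplexGram, hpq, hadj, C.valid hadj]
    · simp [simplexGram, hpq, hadj]

lemma Coloring.posSemidef_smul_one_sub_adjMatrix [Fintype V] (C : G.Coloring α) {c : ℝ}
    (hc : (G.adjMatrix ℝ - c • 1).PosSemidef) :
    ((c * (1 - Fintype.card α)) • 1 - G.adjMatrix ℝ).PosSemidef :=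
  C.sub_smul_one_hadamard_simplexGram c ▸ hc.hadamard (posSemidef_simplexGram C)

end SimpleGraph

theorem hoffman_chromatic_bound_general
    {V : Type*} [Fintype V] [DecidableEq V]
    (G : SimpleGraph V) [DecidableRel G.Adj]
    (hedge : ∃ u v : V, G.Adj u v)
    (hA : (G.adjMatrix ℝ).IsHermitian)
    (lam1 lamn : ℝ)
    (h1mem : ∃ i, hA.eigenvalues i = lam1)
    (hnmin : ∀ i, lamn ≤ hA.eigenvalues i)
    (chi : ℕ) (hchi : G.chromaticNumber = (chi : ℕ∞)) :
    1 - lam1 / lamn ≤ (chi : ℝ) := by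
  obtain ⟨u, v, huv⟩ := hedge
  obtain ⟨i, rfl⟩ := h1mem
  have hpsd : (G.adjMatrix ℝ - lamn • 1).PosSemidef := (hA.posSemidef_sub_smul_one_iff lamn).2 hnmin
  have hneg : lamn < 0 := by linarith [huv.le_neg_one_of_posSemidef hpsd]
  obtain ⟨C⟩ : G.Colorable chi := by simpa [hchi] using G.colorable_chromaticNumber_of_fintype
  have hle : hA.eigenvalues i ≤ lamn * (1 - chi) := by
    simpa using (hA.posSemidef_smul_one_sub_iff _).1 (C.posSemidef_smul_one_sub_adjMatrix hpsd) i
  rw [sub_le_comm, le_div_iff_of_neg hneg]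
  linarith

/-- Hoffman's bound: if `G` has at least one edge, then
`χ(G) ≥ 1 − λ₁/λ_n`, where `lam1` and `lamn` are the largest and smallest
adjacency eigenvalues. -/
theorem hoffman_chromatic_bound
    {V : Type*} [Fintype V] [DecidableEq V]
    (G : SimpleGraph V) [DecidableRel G.Adj]
    (hedge : ∃ u v : V, G.Adj u v)
    (hA : (G.adjMatrix ℝ).IsHermitian)
    (lam1 lamn : ℝ)
    (h1mem : ∃ i, hA.eigenvalues i = lam1) (h1max : ∀ i, hA.eigenvalues i ≤ lam1)
    (hnmem : ∃ i, hA.eigenvalues i = lamn) (hnmin : ∀ i, lamn ≤ hA.eigenvalues i)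
    (chi : ℕ) (hchi : G.chromaticNumber = (chi : ℕ∞)) :
    1 - lam1 / lamn ≤ (chi : ℝ) :=
  hoffman_chromatic_bound_general G hedge hA lam1 lamn h1mem hnmin chi hchi
end

section
/- Let G be a connected graph with chromatic number χ attaining Hoffman's bound, i.e., χ = 1 − λ₁/λ_n. Then the partition of V into the χ color classes of any proper χ-coloring is weight-regular, and the smallest eigenvalue λ_n of G has multiplicity at least χ − 1. -/
/-!
Let `u_j` be the Perron vector `ν` restricted to the `j`-th colour class and
`w_j = ν - χ • u_j`. Colour classes are independent, so `u_j ⬝ A u_j = 0`, and expanding gives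
`∑ j, w_j ⬝ (A - λₙ) w_j = -χ (λ₁ + (χ - 1) λₙ) ‖ν‖²`, which vanishes exactly when Hoffman's
bound is attained. Every summand is nonnegative because `A - λₙ` is positive semidefinite, so
every `w_j` is a `λₙ`-eigenvector. Read at a vertex `u`, `A w_j = λₙ w_j` says
`b*(u, j) = (λ₁ - λₙ) / χ + λₙ [colour u = j]`, which is weight-regularity; and since every colour
class of an optimal colouring is nonempty, the `w_j` for all colours but one are linearly
independent.
-/

open Finset Matrix

open scoped ComplexOrder

namespace Matrix.IsHermitian

variable {𝕜 n : Type*} [RCLike 𝕜] [Fintype n] [DecidableEq n] {A : Matrix n n 𝕜}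
  (hA : A.IsHermitian)

open Unitary in
lemma sub_smul_one_eq_conjStarAlgAut (c : ℝ) :
    A - (c : 𝕜) • 1 = conjStarAlgAut 𝕜 _ hA.eigenvectorUnitary
      (diagonal (RCLike.ofReal ∘ fun i => hA.eigenvalues i - c)) := by
  conv_lhs => rw [hA.spectral_theorem]
  rw [← map_one (conjStarAlgAut 𝕜 _ hA.eigenvectorUnitary), ← map_smul, ← map_sub,
    ← diagonal_one, ← diagonal_smul, diagonal_sub]
  congr 2
  ext i
  simp

lemma posSemidef_sub_smul_one {c : ℝ} (hc : ∀ i, c ≤ hA.eigenvalues i) :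
    (A - (c : 𝕜) • 1).PosSemidef := by
  rw [hA.sub_smul_one_eq_conjStarAlgAut, Unitary.conjStarAlgAut_apply,
    Unitary.isUnit_coe.posSemidef_star_right_conjugate_iff, posSemidef_diagonal_iff]
  intro i
  simpa using hc i

lemma rank_sub_smul_one (c : ℝ) :
    (A - (c : 𝕜) • 1).rank = Fintype.card {i // hA.eigenvalues i ≠ c} := by
  rw [hA.sub_smul_one_eq_conjStarAlgAut, Unitary.conjStarAlgAut_apply, ← Unitary.coe_star]
  simp [-isUnit_iff_ne_zero, -Unitary.coe_star, rank_diagonal, sub_eq_zero]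

lemma card_le_card_eigenvalues_eq {ι : Type*} [Fintype ι] {c : ℝ} {w : ι → n → 𝕜}
    (hw : LinearIndependent 𝕜 w) (hAw : ∀ j, A *ᵥ w j = (c : 𝕜) • w j) :
    Fintype.card ι ≤ Fintype.card {i // hA.eigenvalues i = c} := by
  set f := (A - (c : 𝕜) • 1).mulVecLin
  have hspan : Submodule.span 𝕜 (Set.range w) ≤ LinearMap.ker f :=
    Submodule.span_le.mpr <| Set.range_subset_iff.mpr fun j => by simp [f, hAw j]
  have hrank : Module.finrank 𝕜 (LinearMap.range f) = Fintype.card {i // hA.eigenvalues i ≠ c} :=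
    hA.rank_sub_smul_one c
  have hnullity := f.finrank_range_add_finrank_ker
  rw [hrank, Module.finrank_fintype_fun_eq_card, Fintype.card_subtype_compl] at hnullity
  have hle := Fintype.card_subtype_le fun i => hA.eigenvalues i = c
  calc Fintype.card ι = Module.finrank 𝕜 (Submodule.span 𝕜 (Set.range w)) :=
        (finrank_span_eq_card hw).symm
    _ ≤ Module.finrank 𝕜 (LinearMap.ker f) := Submodule.finrank_mono hspan
    _ = _ := by omega

end Matrix.IsHermitian

lemma Matrix.PosSemidef.mulVec_eq_zero_of_sum_dotProduct_mulVec_eq_zero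
    {𝕜 n ι : Type*} [RCLike 𝕜] [Fintype n] {B : Matrix n n 𝕜} (hB : B.PosSemidef)
    {s : Finset ι} {x : ι → n → 𝕜} (hx : ∑ j ∈ s, star (x j) ⬝ᵥ B *ᵥ x j = 0) :
    ∀ j ∈ s, B *ᵥ x j = 0 := by
  intro j hj
  rw [← hB.dotProduct_mulVec_zero_iff]
  exact (Finset.sum_eq_zero_iff_of_nonneg fun i _ => hB.dotProduct_mulVec_nonneg (x i)).mp hx j hj

lemma Matrix.sum_dotProduct_mulVec_sub_card_smul {R n ι : Type*} [CommRing R] [Fintype n]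
    [Fintype ι] (B : Matrix n n R) {u : ι → n → R} {ν : n → R} (hu : ∑ j, u j = ν) :
    ∑ j, (ν - (Fintype.card ι : R) • u j) ⬝ᵥ B *ᵥ (ν - (Fintype.card ι : R) • u j)
      = (Fintype.card ι : R) ^ 2 * ∑ j, u j ⬝ᵥ B *ᵥ u j
        - (Fintype.card ι : R) * (ν ⬝ᵥ B *ᵥ ν) := by
  have hl : ∑ j, u j ⬝ᵥ B *ᵥ ν = ν ⬝ᵥ B *ᵥ ν := by rw [← sum_dotProduct, hu]
  have hr : ∑ j, ν ⬝ᵥ B *ᵥ u j = ν ⬝ᵥ B *ᵥ ν := by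
    rw [← dotProduct_sum, ← mulVec_sum, hu]
  simp only [mulVec_sub, mulVec_smul, dotProduct_sub, sub_dotProduct, dotProduct_smul,
    smul_dotProduct, smul_eq_mul, Finset.sum_sub_distrib, ← Finset.mul_sum, Finset.sum_const,
    Finset.card_univ, nsmul_eq_mul, hl, hr]
  ring

lemma Matrix.mulVec_eq_of_mulVec_sub_smul_eq {K n : Type*} [Field K] [Fintype n]
    {A : Matrix n n K} {ν u : n → K} {a b k : K} (hk : k ≠ 0) (hν : A *ᵥ ν = a • ν)
    (hw : A *ᵥ (ν - k • u) = b • (ν - k • u)) :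
    A *ᵥ u = ((a - b) / k) • ν + b • u := by
  ext i
  have hi := congrFun hw i
  simp only [mulVec_sub, mulVec_smul, hν, Pi.sub_apply, Pi.smul_apply, smul_eq_mul] at hi
  simp only [Pi.add_apply, Pi.smul_apply, smul_eq_mul]
  field_simp
  linear_combination -hi

lemma Set.sum_indicator_fiber {V ι M : Type*} [Fintype ι] [DecidableEq ι] [AddCommMonoid M]
    (c : V → ι) (f : V → M) : ∑ j, {v | c v = j}.indicator f = f := by
  ext v
  simp [Set.indicator_apply]

lemma linearIndependent_sub_smul_indicator {K V ι : Type*} [Field K] [Fintype ι] {c : V → ι}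
    (hc : Function.Surjective c) {ν : V → K} (hν : ∀ v, ν v ≠ 0) {k : K} (hk : k ≠ 0) (j₀ : ι) :
    LinearIndependent K fun j : {j // j ≠ j₀} => ν - k • {v | c v = j}.indicator ν := by
  classical
  rw [Fintype.linearIndependent_iff]
  intro g hg
  have hval : ∀ z, (∑ i, g i) * ν z - k * ν z * ∑ i : {j // j ≠ j₀}, (if c z = i then g i else 0)
      = 0 := by
    intro z
    calc _ = ∑ i, g i * (ν z - k * if c z = i then ν z else 0) := by
          rw [Finset.sum_mul, Finset.mul_sum, ← Finset.sum_sub_distrib]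
          refine Finset.sum_congr rfl fun i _ => ?_
          split_ifs <;> ring
      _ = 0 := by simpa [Set.indicator_apply] using congrFun hg z
  have hsum : ∑ i, g i = 0 := by
    obtain ⟨z, hz⟩ := hc j₀
    have := hval z
    rwa [Finset.sum_eq_zero fun i _ => if_neg (hz ▸ i.2.symm), mul_zero, sub_zero,
      mul_eq_zero, or_iff_left (hν z)] at this
  intro i
  obtain ⟨z, hz⟩ := hc i
  have := hval z
  rw [hsum, Fintype.sum_eq_single i fun i' hi' => if_neg (hz ▸ Subtype.coe_ne_coe.mpr hi'.symm),
    if_pos hz] at this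
  simpa [hk, hν z] using this

namespace SimpleGraph

variable {V : Type*} [Fintype V] {G : SimpleGraph V} [DecidableRel G.Adj]

lemma IsIndepSet.indicator_dotProduct_adjMatrix_mulVec_indicator {α : Type*} [NonAssocSemiring α]
    {s : Set V} (hs : G.IsIndepSet s) (f : V → α) :
    s.indicator f ⬝ᵥ G.adjMatrix α *ᵥ s.indicator f = 0 := by
  classical
  refine Finset.sum_eq_zero fun u _ => ?_
  by_cases hu : u ∈ s
  · rw [adjMatrix_mulVec_apply, Finset.sum_eq_zero, mul_zero]
    intro v hv
    have hvs : v ∉ s := fun hvs => hs hu hvs (G.ne_of_adj ((mem_neighborFinset ..).mp hv))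
      ((mem_neighborFinset ..).mp hv)
    simp [hvs]
  · simp [hu]

variable [DecidableEq V] {ι : Type*} [DecidableEq ι]

lemma bstar_eq_mulVec_indicator (ν : V → ℝ) (c : V → ι) (u : V) (j : ι) :
    bstar G ν c u j = (ν u)⁻¹ * (G.adjMatrix ℝ *ᵥ {v | c v = j}.indicator ν) u := by
  simp [bstar, adjMatrix_mulVec_apply, Finset.sum_filter, Set.indicator_apply]

lemma weightRegular_of_mulVec_indicator_eq {ν : V → ℝ} (hν : ∀ u, ν u ≠ 0) {c : V → ι}
    (h : ∀ j, ∃ a b : ℝ, G.adjMatrix ℝ *ᵥ {v | c v = j}.indicator ν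
      = a • ν + b • {v | c v = j}.indicator ν) :
    WeightRegular G ν c := by
  intro j u v huv
  obtain ⟨a, b, hab⟩ := h j
  have hval (w : V) : bstar G ν c w j = a + if c w = j then b else 0 := by
    rw [bstar_eq_mulVec_indicator, hab, inv_mul_eq_iff_eq_mul₀ (hν w)]
    simp only [Pi.add_apply, Pi.smul_apply, smul_eq_mul, Set.indicator_apply, Set.mem_ofPred_eq]
    split_ifs <;> ring
  rw [hval, hval, huv]

lemma Coloring.adjMatrix_mulVec_sub_card_smul_indicator_of_hoffman {C : G.Coloring ι} [Fintype ι]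
    (hA : (G.adjMatrix ℝ).IsHermitian) {lam1 lamn : ℝ} (hmin : ∀ i, lamn ≤ hA.eigenvalues i)
    {ν : V → ℝ} (hν : G.adjMatrix ℝ *ᵥ ν = lam1 • ν)
    (hHoff : lam1 = lamn * (1 - (Fintype.card ι : ℝ))) (j : ι) :
    G.adjMatrix ℝ *ᵥ (ν - (Fintype.card ι : ℝ) • {v | C v = j}.indicator ν)
      = lamn • (ν - (Fintype.card ι : ℝ) • {v | C v = j}.indicator ν) := by
  set A := G.adjMatrix ℝ
  set k : ℝ := (Fintype.card ι : ℝ)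
  set u : ι → V → ℝ := fun j => {v | C v = j}.indicator ν
  have hB : (A - lamn • 1).PosSemidef := by simpa using hA.posSemidef_sub_smul_one hmin
  have hu : ∑ j, u j = ν := Set.sum_indicator_fiber C ν
  have hBν : ν ⬝ᵥ (A - lamn • 1) *ᵥ ν = (lam1 - lamn) * (ν ⬝ᵥ ν) := by
    rw [sub_mulVec, smul_mulVec, one_mulVec, hν, ← sub_smul, dotProduct_smul, smul_eq_mul]
  have hBu : ∑ j, u j ⬝ᵥ (A - lamn • 1) *ᵥ u j = -lamn * (ν ⬝ᵥ ν) := by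
    have hsq : ∀ j, u j ⬝ᵥ u j = u j ⬝ᵥ ν := fun j => by
      refine Finset.sum_congr rfl fun v _ => ?_
      by_cases hv : C v = j <;> simp [u, hv]
    have hAu (j : ι) : u j ⬝ᵥ A *ᵥ u j = 0 :=
      (C.isIndepSet_colorClass j).indicator_dotProduct_adjMatrix_mulVec_indicator ν
    calc ∑ j, u j ⬝ᵥ (A - lamn • 1) *ᵥ u j = ∑ j, -lamn * (u j ⬝ᵥ ν) :=
          Finset.sum_congr rfl fun j _ => by
            rw [sub_mulVec, smul_mulVec, one_mulVec, dotProduct_sub, dotProduct_smul, hsq, hAu]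
            simp
      _ = -lamn * (ν ⬝ᵥ ν) := by rw [← Finset.mul_sum, ← sum_dotProduct, hu]
  have hsum : ∑ j, star (ν - k • u j) ⬝ᵥ (A - lamn • 1) *ᵥ (ν - k • u j) = 0 := by
    simp only [star_trivial]
    rw [sum_dotProduct_mulVec_sub_card_smul _ hu, hBu, hBν, hHoff]
    ring
  have := hB.mulVec_eq_zero_of_sum_dotProduct_mulVec_eq_zero hsum j (Finset.mem_univ j)
  rwa [sub_mulVec, smul_mulVec, one_mulVec, sub_eq_zero] at this

end SimpleGraph

theorem hoffman_coloring_weightRegular_general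
    {V : Type*} [Fintype V] [DecidableEq V]
    (G : SimpleGraph V) [DecidableRel G.Adj]
    (hedge : ∃ u v : V, G.Adj u v)
    (hA : (G.adjMatrix ℝ).IsHermitian)
    (lam1 lamn : ℝ)
    (hnmin : ∀ i, lamn ≤ hA.eigenvalues i)
    (ν : V → ℝ) (hpos : ∀ u, 0 < ν u)
    (heig : (G.adjMatrix ℝ).mulVec ν = lam1 • ν)
    (chi : ℕ) (hchi : G.chromaticNumber = (chi : ℕ∞))
    (hHoff : (chi : ℝ) = 1 - lam1 / lamn) :
    (∀ C : G.Coloring (Fin chi), WeightRegular G ν (fun u => C u))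
    ∧ chi - 1 ≤ (Finset.univ.filter (fun i => hA.eigenvalues i = lamn)).card := by
  obtain ⟨a, b, hab⟩ := hedge
  have hchi2 : 2 ≤ chi := by exact_mod_cast hchi ▸ G.two_le_chromaticNumber_of_adj hab
  have hlamn : lamn ≠ 0 := by
    rintro rfl
    rw [div_zero, sub_zero] at hHoff
    norm_cast at hHoff
    omega
  have hHoff' : lam1 = lamn * (1 - (Fintype.card (Fin chi) : ℝ)) := by
    rw [Fintype.card_fin, hHoff]
    field_simp
    ring
  have hν : ∀ u, ν u ≠ 0 := fun u => (hpos u).ne'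
  have hχ : (chi : ℝ) ≠ 0 := by positivity
  have hw (C : G.Coloring (Fin chi)) (j : Fin chi) :=
    C.adjMatrix_mulVec_sub_card_smul_indicator_of_hoffman hA hnmin heig hHoff' j
  simp only [Fintype.card_fin] at hw
  refine ⟨fun C => SimpleGraph.weightRegular_of_mulVec_indicator_eq hν fun j =>
    ⟨_, _, mulVec_eq_of_mulVec_sub_smul_eq hχ heig (hw C j)⟩, ?_⟩
  obtain ⟨C⟩ := SimpleGraph.chromaticNumber_le_iff_colorable.mp hchi.le
  have hsurj := SimpleGraph.le_chromaticNumber_iff_forall_surjective.mp hchi.ge C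
  calc chi - 1 = Fintype.card {j : Fin chi // j ≠ ⟨0, by omega⟩} := by simp
    _ ≤ Fintype.card {i // hA.eigenvalues i = lamn} :=
      hA.card_le_card_eigenvalues_eq (linearIndependent_sub_smul_indicator hsurj hν hχ _)
        fun j => by simpa using hw C j
    _ = _ := Fintype.card_subtype _

/-- if a connected graph attains Hoffman's bound
`χ = 1 − λ₁/λ_n`, then the color classes of any proper `χ`-coloring form a
weight-regular partition, and the smallest eigenvalue has multiplicity at least
`χ − 1`. -/
theorem hoffman_coloring_weightRegular
    {V : Type*} [Fintype V] [DecidableEq V]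
    (G : SimpleGraph V) [DecidableRel G.Adj]
    (hconn : G.Connected)
    (hedge : ∃ u v : V, G.Adj u v)
    (hA : (G.adjMatrix ℝ).IsHermitian)
    (lam1 lamn : ℝ)
    (h1mem : ∃ i, hA.eigenvalues i = lam1) (h1max : ∀ i, hA.eigenvalues i ≤ lam1)
    (hnmem : ∃ i, hA.eigenvalues i = lamn) (hnmin : ∀ i, lamn ≤ hA.eigenvalues i)
    (ν : V → ℝ) (hpos : ∀ u, 0 < ν u)
    (heig : (G.adjMatrix ℝ).mulVec ν = lam1 • ν)
    (chi : ℕ) (hchi : G.chromaticNumber = (chi : ℕ∞))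
    (hHoff : (chi : ℝ) = 1 - lam1 / lamn) :
    (∀ C : G.Coloring (Fin chi), WeightRegular G ν (fun u => C u))
    ∧ chi - 1 ≤ (Finset.univ.filter (fun i => hA.eigenvalues i = lamn)).card :=
  hoffman_coloring_weightRegular_general G hedge hA lam1 lamn hnmin ν hpos heig chi hchi hHoff
end
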